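/- Let n ≥ 2 and 1 ≤ r ≤ n−1 be integers, let x ∈ ℝ^{n−1}, let κ ∈ ℝ, and let s, c ∈ ℝ with s ≠ 0. Define λ ∈ ℝ^{n−1} by λ_α = s·x_α − κ·c for α = 1,…,n−1. Then (c/s)·σ_r(λ) − (κ/s)·σ_{r−1}(λ) = c·s^{r−1}·σ_r(x) + (1/s)·Σ_{l=0}^{r−1} (−κ)^{r−l} · c^{r−1−l} · s^l · [c²·C(n−l−1, n−r−1) + C(n−l−1, n−r)] · σ_l(x). (In the paper this identity, with s = sin θ, c = cos θ, arises in the first variation formula, where λ are the principal curvatures of M restricted to the boundary and x are the principal curvatures of ∂M in ∂B.) -/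
import Mathlib


open Finset

/-- The `r`-th elementary symmetric polynomial of `x = (x_1, …, x_m)`. -/
noncomputable def esymm (m : ℕ) (x : Fin m → ℝ) (r : ℕ) : ℝ :=
  ∑ s ∈ powersetCard r (univ : Finset (Fin m)), ∏ i ∈ s, x i

open Polynomial

lemma esymm_eq_coeff (m : ℕ) (f : Fin m → ℝ) (r : ℕ) (hrm : r ≤ m) :
    esymm m f r = (∏ i : Fin m, (X + C (f i))).coeff (m - r) := by
  rw [Finset.prod_X_add_C_coeff (univ : Finset (Fin m)) f
    (by simpa using Nat.sub_le m r)]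
  simp only [card_univ, Fintype.card_fin]
  rw [Nat.sub_sub_self hrm]
  rfl

lemma esymm_shift (m : ℕ) (f : Fin m → ℝ) (t : ℝ) (r : ℕ) (hrm : r ≤ m) :
    esymm m (fun i => f i + t) r
      = ∑ l ∈ Finset.range (r + 1),
          t ^ (r - l) * ((m - l).choose (m - r) : ℝ) * esymm m f l := by
  have hQ : (∏ i : Fin m, (X + C (f i + t)))
      = (∏ i : Fin m, (X + C (f i))).comp (X + C t) := by
    rw [Polynomial.prod_comp]
    congr 1
    ext i
    simp [add_comp]
    ring
  set P : ℝ[X] := ∏ i : Fin m, (X + C (f i)) with hP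
  have hdeg : P.natDegree < m + 1 := by
    apply Nat.lt_succ_of_le
    calc P.natDegree ≤ ∑ i : Fin m, (X + C (f i)).natDegree := natDegree_prod_le _ _
    _ ≤ ∑ _i : Fin m, 1 := by
        apply Finset.sum_le_sum
        intro i _
        simp [natDegree_X_add_C]
    _ = m := by simp
  have hcomp : P.comp (X + C t) = ∑ j ∈ Finset.range (m + 1),
      C (P.coeff j) * (X + C t) ^ j := by
    conv_lhs => rw [P.as_sum_range' (m+1) hdeg]
    rw [Polynomial.sum_comp]
    simp [mul_comp]
  have hcoeff : ∀ j ≤ m, P.coeff j = esymm m f (m - j) := by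
    intro j hj
    rw [esymm_eq_coeff m f (m - j) (Nat.sub_le m j), Nat.sub_sub_self hj]
  have key : esymm m (fun i => f i + t) r
      = ∑ l ∈ Finset.range (m + 1),
          t ^ (r - l) * ((m - l).choose (m - r) : ℝ) * esymm m f l := by
    rw [esymm_eq_coeff m _ r hrm, hQ, hcomp, finset_sum_coeff]
    simp only [coeff_C_mul, coeff_X_add_C_pow]
    rw [← Finset.sum_range_reflect]
    simp only [Nat.add_sub_cancel]
    apply Finset.sum_congr rfl
    intro l hl
    rw [Finset.mem_range, Nat.lt_succ_iff] at hl
    rw [hcoeff (m - l) (Nat.sub_le m l), Nat.sub_sub_self hl]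
    by_cases hlr : l ≤ r
    · rw [(by omega : m - l - (m - r) = r - l)]
      ring
    · rw [Nat.choose_eq_zero_of_lt (by omega : m - l < m - r)]
      simp
  rw [key]
  symm
  apply Finset.sum_subset
  · exact Finset.range_subset_range.2 (by omega)
  · intro l hlm hl
    rw [Finset.mem_range, Nat.lt_succ_iff] at hlm
    rw [Finset.mem_range, Nat.lt_succ_iff, not_le] at hl
    rw [Nat.choose_eq_zero_of_lt (by omega : m - l < m - r)]
    simp

lemma esymm_smul (m : ℕ) (f : Fin m → ℝ) (a : ℝ) (r : ℕ) :
    esymm m (fun i => a * f i) r = a ^ r * esymm m f r := by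
  unfold esymm
  rw [Finset.mul_sum]
  apply Finset.sum_congr rfl
  intro u hu
  rw [Finset.mem_powersetCard] at hu
  rw [Finset.prod_mul_distrib, Finset.prod_const, hu.2]

/-- The boundary identity from the first variation formula: with
`λ_α = s·x_α - κ·c` (for `s = sin θ`, `c = cos θ`),
`(c/s)·σ_r(λ) - (κ/s)·σ_{r-1}(λ)
  = c·s^{r-1}·σ_r(x)
    + (1/s)·Σ_{l=0}^{r-1} (-κ)^{r-l}·c^{r-1-l}·s^l·[c²·C(n-l-1,n-r-1) + C(n-l-1,n-r)]·σ_l(x)`. -/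
theorem boundary_curvature_identity (n r : ℕ) (hn : 2 ≤ n) (hr1 : 1 ≤ r) (hr2 : r ≤ n - 1)
    (x : Fin (n - 1) → ℝ) (κ s c : ℝ) (hs : s ≠ 0) :
    (c / s) * esymm (n - 1) (fun α => s * x α - κ * c) r
        - (κ / s) * esymm (n - 1) (fun α => s * x α - κ * c) (r - 1)
      = c * s ^ (r - 1) * esymm (n - 1) x r
        + (1 / s) * ∑ l ∈ Finset.range r,
            (-κ) ^ (r - l) * c ^ (r - 1 - l) * s ^ l *
              (c ^ 2 * ((n - l - 1).choose (n - r - 1) : ℝ)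
                + ((n - l - 1).choose (n - r) : ℝ)) * esymm (n - 1) x l := by
  have hfun : (fun α : Fin (n - 1) => s * x α - κ * c)
      = fun α => (fun β : Fin (n - 1) => s * x β) α + (-(κ * c)) := by
    funext α; ring
  have hA : esymm (n - 1) (fun α => s * x α - κ * c) r
      = ∑ l ∈ Finset.range (r + 1),
          (-(κ * c)) ^ (r - l) * (((n - 1) - l).choose ((n - 1) - r) : ℝ)
            * (s ^ l * esymm (n - 1) x l) := by
    rw [hfun, esymm_shift (n - 1) _ _ r hr2]
    exact Finset.sum_congr rfl fun l _ => by rw [esymm_smul]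
  have hB : esymm (n - 1) (fun α => s * x α - κ * c) (r - 1)
      = ∑ l ∈ Finset.range r,
          (-(κ * c)) ^ (r - 1 - l) * (((n - 1) - l).choose ((n - 1) - (r - 1)) : ℝ)
            * (s ^ l * esymm (n - 1) x l) := by
    rw [hfun, esymm_shift (n - 1) _ _ (r - 1) (le_trans (Nat.sub_le r 1) hr2),
      (by omega : r - 1 + 1 = r)]
    exact Finset.sum_congr rfl fun l _ => by rw [esymm_smul]
  rw [hA, hB, Finset.sum_range_succ, mul_add, Finset.mul_sum, Finset.mul_sum]
  have hlast : (c / s) * ((-(κ * c)) ^ (r - r) * (((n - 1) - r).choose ((n - 1) - r) : ℝ)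
        * (s ^ r * esymm (n - 1) x r)) = c * s ^ (r - 1) * esymm (n - 1) x r := by
    obtain ⟨k, rfl⟩ : ∃ k, r = k + 1 := ⟨r - 1, by omega⟩
    rw [Nat.sub_self, Nat.choose_self, Nat.add_sub_cancel, pow_zero, pow_succ]
    push_cast
    field_simp
  have hsum : ∑ l ∈ Finset.range r, (c / s) *
          ((-(κ * c)) ^ (r - l) * (((n - 1) - l).choose ((n - 1) - r) : ℝ)
            * (s ^ l * esymm (n - 1) x l))
        - ∑ l ∈ Finset.range r, (κ / s) *
          ((-(κ * c)) ^ (r - 1 - l) * (((n - 1) - l).choose ((n - 1) - (r - 1)) : ℝ)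
            * (s ^ l * esymm (n - 1) x l))
      = (1 / s) * ∑ l ∈ Finset.range r,
          (-κ) ^ (r - l) * c ^ (r - 1 - l) * s ^ l *
            (c ^ 2 * ((n - l - 1).choose (n - r - 1) : ℝ)
              + ((n - l - 1).choose (n - r) : ℝ)) * esymm (n - 1) x l := by
    rw [← Finset.sum_sub_distrib, Finset.mul_sum]
    apply Finset.sum_congr rfl
    intro l hl
    rw [Finset.mem_range] at hl
    rw [(by omega : (n - 1) - l = n - l - 1), (by omega : (n - 1) - r = n - r - 1),
      (by omega : (n - 1) - (r - 1) = n - r)]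
    obtain ⟨d, hd⟩ : ∃ d, r - 1 - l = d := ⟨r - 1 - l, rfl⟩
    rw [hd, (by omega : r - l = d + 1)]
    field_simp
    ring
  linear_combination hlast + hsum
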